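/- Let $t_0 \in \mathbb{R}$, let $k_1, k_2, k_3 > 0$, $0 < \gamma < 1$, $\iota > 1$, and let $s : \mathbb{R} \to \mathbb{R}$ be differentiable and satisfy, for all $t \ge t_0$, $s'(t) = -\big(k_1 s(t) + k_2\,\mathrm{sign}(s(t))|s(t)|^{\gamma} + k_3\,\mathrm{sign}(s(t))|s(t)|^{\iota}\big)$. Then $s(t) = 0$ for every $t \ge t_0 + \frac{2}{2^{\frac{\gamma+1}{2}} k_2 (1-\gamma)} + \frac{2}{2^{\frac{\iota+1}{2}} k_3 (\iota-1)}$. -/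

import Mathlib

/-!
With `V = s² / 2` the equation gives `V' ≤ -(a V^p + b V^q)`, where `p = (γ + 1) / 2 < 1`,
`q = (ι + 1) / 2 > 1`, `a = 2^p k₂` and `b = 2^q k₃`. While `V > 0`, the quantity
`V^(1-r) / (1 - r)` has derivative `V^(-r) V'`, which is at most `-a` for `r = p` and at most `-b`
for `r = q`. For `r = q` this quantity is negative, so `V` falls below `1` within time
`1 / (b (q - 1))` whatever its initial value; for `r = p` it is nonnegative, so from there `V`
reaches `0` within time `1 / (a (1 - p))`.
-/

open Real Set

lemma mul_sign_mul_abs_rpow {c : ℝ} (hc : c + 1 ≠ 0) (x : ℝ) :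
    x * (sign x * |x| ^ c) = |x| ^ (c + 1) := by
  have hsign : x * sign x = |x| := by
    rcases lt_trichotomy x 0 with hx | rfl | hx
    · rw [sign_of_neg hx, abs_of_neg hx]; ring
    · simp
    · rw [sign_of_pos hx, abs_of_pos hx]; ring
  rw [rpow_add_one' (abs_nonneg x) hc, ← mul_assoc, hsign, mul_comm]

lemma abs_rpow_eq_two_rpow_mul_sq_div_two_rpow (x r : ℝ) :
    |x| ^ r = 2 ^ (r / 2) * (x ^ 2 / 2) ^ (r / 2) := by
  rw [← mul_rpow zero_le_two (by positivity), mul_div_cancel₀ _ two_ne_zero, ← sq_abs,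
    ← rpow_two, ← rpow_mul (abs_nonneg x), mul_div_cancel₀ r two_ne_zero]

section PowerDecay

variable {V : ℝ → ℝ} {t₀ c p : ℝ}

lemma hasDerivAt_rpow_one_sub_div {x V' : ℝ} (hp : p ≠ 1) (hV : HasDerivAt V V' x)
    (hx : 0 < V x) : HasDerivAt (fun t ↦ V t ^ (1 - p) / (1 - p)) (V x ^ (-p) * V') x := by
  refine ((hV.rpow_const (p := 1 - p) (Or.inl hx.ne')).div_const (1 - p)).congr_deriv ?_
  rw [show 1 - p - 1 = -p by ring]
  field_simp [sub_ne_zero.2 hp.symm]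

lemma rpow_neg_mul_le_neg {v v' : ℝ} (hv : 0 < v) (h : v' ≤ -(c * v ^ p)) :
    v ^ (-p) * v' ≤ -c := by
  rw [rpow_neg hv.le, inv_mul_le_iff₀ (rpow_pos_of_pos hv p)]
  linarith

lemma antitoneOn_of_deriv_le_neg_mul_rpow (hV : Differentiable ℝ V) (hV₀ : ∀ t, 0 ≤ V t)
    (hc : 0 ≤ c) (hV' : ∀ t, t₀ ≤ t → deriv V t ≤ -(c * V t ^ p)) :
    AntitoneOn V (Ici t₀) := by
  refine antitoneOn_of_deriv_nonpos (convex_Ici t₀) hV.continuous.continuousOn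
    hV.differentiableOn fun t ht ↦ ?_
  rw [interior_Ici] at ht
  linarith [hV' t ht.le, mul_nonneg hc (rpow_nonneg (hV₀ t) p)]

lemma rpow_one_sub_div_sub_le (hV : Differentiable ℝ V) (hV₀ : ∀ t, 0 ≤ V t) (hc : 0 ≤ c)
    (hp : p ≠ 1) (hV' : ∀ t, t₀ ≤ t → deriv V t ≤ -(c * V t ^ p)) {t₁ t₂ : ℝ}
    (h₀₁ : t₀ ≤ t₁) (h₁₂ : t₁ ≤ t₂) (hpos : 0 < V t₂) :
    V t₂ ^ (1 - p) / (1 - p) - V t₁ ^ (1 - p) / (1 - p) ≤ -c * (t₂ - t₁) := by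
  have hanti := antitoneOn_of_deriv_le_neg_mul_rpow hV hV₀ hc hV'
  have hpos' : ∀ t ∈ Icc t₁ t₂, 0 < V t := fun t ht ↦
    hpos.trans_le (hanti (h₀₁.trans ht.1) (h₀₁.trans h₁₂) ht.2)
  have hderiv : ∀ t ∈ Icc t₁ t₂,
      HasDerivAt (fun t ↦ V t ^ (1 - p) / (1 - p)) (V t ^ (-p) * deriv V t) t := fun t ht ↦
    hasDerivAt_rpow_one_sub_div hp (hV t).hasDerivAt (hpos' t ht)
  refine (convex_Icc t₁ t₂).image_sub_le_mul_sub_of_deriv_le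
    (fun t ht ↦ (hderiv t ht).continuousAt.continuousWithinAt)
    (fun t ht ↦ (hderiv t (interior_subset ht)).differentiableAt.differentiableWithinAt)
    (fun t ht ↦ ?_) t₁ (left_mem_Icc.2 h₁₂) t₂ (right_mem_Icc.2 h₁₂) h₁₂
  have ht := interior_subset ht
  rw [(hderiv t ht).deriv]
  exact rpow_neg_mul_le_neg (hpos' t ht) (hV' t (h₀₁.trans ht.1))

lemma le_one_of_deriv_le_neg_mul_rpow (hV : Differentiable ℝ V) (hV₀ : ∀ t, 0 ≤ V t)
    (hc : 0 < c) (hp : 1 < p) (hV' : ∀ t, t₀ ≤ t → deriv V t ≤ -(c * V t ^ p)) :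
    V (t₀ + 1 / (c * (p - 1))) ≤ 1 := by
  set t₁ := t₀ + 1 / (c * (p - 1))
  have h₀₁ : t₀ ≤ t₁ := le_add_of_nonneg_right (by have := sub_pos.2 hp; positivity)
  rcases (hV₀ t₁).eq_or_lt with h | hpos
  · rw [← h]; exact zero_le_one
  have key := rpow_one_sub_div_sub_le hV hV₀ hc.le hp.ne' hV' le_rfl h₀₁ hpos
  have hp₁ : 0 < p - 1 := sub_pos.2 hp
  rw [show t₁ - t₀ = 1 / (c * (p - 1)) by ring, div_sub_div_same,
    div_le_iff_of_neg (by linarith)] at key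
  field_simp at key
  have h₁ : 1 ≤ V t₁ ^ (1 - p) - V t₀ ^ (1 - p) := le_of_mul_le_mul_left (by linarith) hp₁
  by_contra! h
  linarith [rpow_nonneg (hV₀ t₀) (1 - p),
    rpow_lt_one_of_one_lt_of_neg h (by linarith : 1 - p < 0)]

lemma eq_zero_of_deriv_le_neg_mul_rpow (hV : Differentiable ℝ V) (hV₀ : ∀ t, 0 ≤ V t)
    (hc : 0 < c) (hp : p < 1) (hV' : ∀ t, t₀ ≤ t → deriv V t ≤ -(c * V t ^ p)) :
    ∀ t, t₀ + V t₀ ^ (1 - p) / (c * (1 - p)) ≤ t → V t = 0 := by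
  set t₁ := t₀ + V t₀ ^ (1 - p) / (c * (1 - p))
  have hp₁ : 0 < 1 - p := sub_pos.2 hp
  have h₀₁ : t₀ ≤ t₁ :=
    le_add_of_nonneg_right (div_nonneg (rpow_nonneg (hV₀ t₀) _) (by positivity))
  have hanti := antitoneOn_of_deriv_le_neg_mul_rpow hV hV₀ hc.le hV'
  suffices h : V t₁ = 0 from fun t ht ↦
    le_antisymm (h ▸ hanti h₀₁ (h₀₁.trans ht) ht) (hV₀ t)
  by_contra h
  have hpos := (hV₀ t₁).lt_of_ne' h
  have key := rpow_one_sub_div_sub_le hV hV₀ hc.le hp.ne hV' le_rfl h₀₁ hpos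
  rw [show t₁ - t₀ = V t₀ ^ (1 - p) / (c * (1 - p)) by ring, div_sub_div_same,
    div_le_iff₀ hp₁] at key
  field_simp at key
  linarith [rpow_pos_of_pos hpos (1 - p)]

theorem eq_zero_of_deriv_le_neg_mul_rpow_add_mul_rpow {a b q : ℝ}
    (hV : Differentiable ℝ V) (hV₀ : ∀ t, 0 ≤ V t) (ha : 0 < a) (hb : 0 < b)
    (hp : p < 1) (hq : 1 < q)
    (hV' : ∀ t, t₀ ≤ t → deriv V t ≤ -(a * V t ^ p + b * V t ^ q)) :
    ∀ t, t₀ + 1 / (b * (q - 1)) + 1 / (a * (1 - p)) ≤ t → V t = 0 := by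
  set t₁ := t₀ + 1 / (b * (q - 1))
  have h₀₁ : t₀ ≤ t₁ := le_add_of_nonneg_right (by have := sub_pos.2 hq; positivity)
  have hVa : ∀ t, t₁ ≤ t → deriv V t ≤ -(a * V t ^ p) := fun t ht ↦ by
    linarith [hV' t (h₀₁.trans ht), mul_nonneg hb.le (rpow_nonneg (hV₀ t) q)]
  have hVb : ∀ t, t₀ ≤ t → deriv V t ≤ -(b * V t ^ q) := fun t ht ↦ by
    linarith [hV' t ht, mul_nonneg ha.le (rpow_nonneg (hV₀ t) p)]
  have hV₁ : V t₁ ^ (1 - p) ≤ 1 :=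
    rpow_le_one (hV₀ t₁) (le_one_of_deriv_le_neg_mul_rpow hV hV₀ hb hq hVb) (sub_pos.2 hp).le
  intro t ht
  refine eq_zero_of_deriv_le_neg_mul_rpow hV hV₀ ha hp hVa t (le_trans ?_ ht)
  gcongr

end PowerDecay

/-- Fixed-time convergence of one scalar channel of the first backstepping step
(equations (B4)-(B6)): the virtual control `α = -(k1 s + k2 s^γ + k3 s^ι)`, where
`s^a := sign(s) * |s|^a`, drives the sliding variable to zero within a time
independent of the initial condition. Here `Real.sign x` is `1` for `x > 0`, `-1`
for `x < 0`, and `0` for `x = 0`; powers are real powers (`rpow`). -/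
theorem virtual_control_fixed_time
    (t0 : ℝ) (k1 k2 k3 γ ι : ℝ)
    (hk1 : 0 < k1) (hk2 : 0 < k2) (hk3 : 0 < k3)
    (hγ0 : 0 < γ) (hγ1 : γ < 1) (hι : 1 < ι)
    (s : ℝ → ℝ) (hs : Differentiable ℝ s)
    (hode : ∀ t, t0 ≤ t →
      deriv s t = -(k1 * s t + k2 * Real.sign (s t) * |s t| ^ γ
        + k3 * Real.sign (s t) * |s t| ^ ι)) :
    ∀ t, t0 + 2 / ((2 : ℝ) ^ ((γ + 1) / 2) * k2 * (1 - γ))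
        + 2 / ((2 : ℝ) ^ ((ι + 1) / 2) * k3 * (ι - 1)) ≤ t → s t = 0 := by
  set p := (γ + 1) / 2 with hp
  set q := (ι + 1) / 2 with hq
  have hV : ∀ t, HasDerivAt (fun t ↦ s t ^ 2 / 2) (s t * deriv s t) t := fun t ↦
    (((hs t).hasDerivAt.pow 2).div_const 2).congr_deriv (by ring)
  have hV' : ∀ t, t0 ≤ t → deriv (fun t ↦ s t ^ 2 / 2) t ≤
      -(2 ^ p * k2 * (s t ^ 2 / 2) ^ p + 2 ^ q * k3 * (s t ^ 2 / 2) ^ q) := fun t ht ↦ by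
    rw [(hV t).deriv, hode t ht]
    calc s t * -(k1 * s t + k2 * sign (s t) * |s t| ^ γ + k3 * sign (s t) * |s t| ^ ι)
        = -(k1 * s t ^ 2 + k2 * (s t * (sign (s t) * |s t| ^ γ))
            + k3 * (s t * (sign (s t) * |s t| ^ ι))) := by ring
      _ ≤ _ := by
        rw [mul_sign_mul_abs_rpow (by linarith), mul_sign_mul_abs_rpow (by linarith),
          abs_rpow_eq_two_rpow_mul_sq_div_two_rpow, abs_rpow_eq_two_rpow_mul_sq_div_two_rpow]
        linarith [mul_nonneg hk1.le (sq_nonneg (s t))]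
  have hT : 1 / (2 ^ q * k3 * (q - 1)) + 1 / (2 ^ p * k2 * (1 - p)) =
      2 / (2 ^ p * k2 * (1 - γ)) + 2 / (2 ^ q * k3 * (ι - 1)) := by
    rw [show q - 1 = (ι - 1) / 2 by ring, show 1 - p = (1 - γ) / 2 by ring]
    field_simp
    ring
  intro t ht
  have hVt := eq_zero_of_deriv_le_neg_mul_rpow_add_mul_rpow (fun t ↦ (hV t).differentiableAt)
    (fun t ↦ by positivity) (by positivity) (by positivity) (by linarith) (by linarith) hV' t
    (by linarith)
  simpa using hVt
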